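/- arXiv:1311.0583 — 2 statements merged into one kernel-verified Lean document; each statement's English description precedes it below -/
import Mathlib

section
/- Suppose the ML(n)BiCG algorithm does not break down up to step m, i.e. p_{s+1}^H A ĝ_s ≠ 0 for all 0 ≤ s ≤ m−1, and let its coefficients be chosen as in the algorithm: α_k = p_k^H r̂_{k−1} / p_k^H A ĝ_{k−1}, and β_s^{(k)} = − p_{s+1}^H A (r̂_k + Σ_{t=max(k−n,0)}^{s−1} β_t^{(k)} ĝ_t) / p_{s+1}^H A ĝ_s for s = max(k−n,0), …, k−1. Then for every 1 ≤ k ≤ m and every 1 ≤ j ≤ k one has p_j^H r̂_k = 0 and p_j^H A ĝ_k = 0, i.e. r̂_k ⟂ span{p_1, …, p_k} and A ĝ_k ⟂ span{p_1, …, p_k}. -/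
open Matrix

/-- The index function `g_n(k) = ⌊(k-1)/n⌋`, rounding toward minus infinity. -/
def gIdx (n k : ℤ) : ℤ := Int.fdiv (k - 1) n

/-- The index function `r_n(k) = k - n * g_n(k)`. -/
def rIdx (n k : ℤ) : ℤ := k - n * gIdx n k

/-- Suppose the ML(n)BiCG algorithm does not break down up to step `m`
(`p_{s+1}ᴴ A ĝ_s ≠ 0` for `0 ≤ s ≤ m-1`), and its coefficients are chosen as in the
algorithm:  `α_k = p_kᴴ r̂_{k-1} / p_kᴴ A ĝ_{k-1}`, and
`β_s^{(k)} = − p_{s+1}ᴴ A (r̂_k + Σ_{t=max(k−n,0)}^{s−1} β_t^{(k)} ĝ_t) / p_{s+1}ᴴ A ĝ_s`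
for `s = max(k−n,0), …, k−1`.  Then for every `1 ≤ k ≤ m` and every `1 ≤ j ≤ k` one has
`p_jᴴ r̂_k = 0` and `p_jᴴ A ĝ_k = 0`. -/
theorem stmt_7 {N : ℕ} (A : Matrix (Fin N) (Fin N) ℂ) (b : Fin N → ℂ)
    (n : ℕ) (hn : 0 < n) (m : ℕ)
    (q : ℤ → (Fin N → ℂ)) (p : ℕ → (Fin N → ℂ))
    (hp : ∀ k : ℕ, 1 ≤ k → p k = (Aᴴ ^ (gIdx n k).toNat) *ᵥ q (rIdx n k))
    (x r g : ℕ → (Fin N → ℂ)) (α : ℕ → ℂ) (β : ℕ → ℕ → ℂ)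
    (hr0 : r 0 = b - A *ᵥ x 0) (hg0 : g 0 = r 0)
    (hbk : ∀ s, s < m → star (p (s + 1)) ⬝ᵥ (A *ᵥ g s) ≠ 0)
    (hα : ∀ k, 1 ≤ k →
      α k = (star (p k) ⬝ᵥ r (k - 1)) / (star (p k) ⬝ᵥ (A *ᵥ g (k - 1))))
    (hx : ∀ k, 1 ≤ k → x k = x (k - 1) + α k • g (k - 1))
    (hr : ∀ k, 1 ≤ k → r k = r (k - 1) - α k • (A *ᵥ g (k - 1)))
    (hβ : ∀ k, 1 ≤ k → ∀ s ∈ Finset.Ico (k - n) k,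
      β k s = -(star (p (s + 1)) ⬝ᵥ
          (A *ᵥ (r k + ∑ t ∈ Finset.Ico (k - n) s, β k t • g t))) /
        (star (p (s + 1)) ⬝ᵥ (A *ᵥ g s)))
    (hg : ∀ k, 1 ≤ k → g k = r k + ∑ s ∈ Finset.Ico (k - n) k, β k s • g s) :
    ∀ k, 1 ≤ k → k ≤ m → ∀ j, 1 ≤ j → j ≤ k →
      star (p j) ⬝ᵥ r k = 0 ∧ star (p j) ⬝ᵥ (A *ᵥ g k) = 0 := by
  -- helper: A *ᵥ sum
  have mulVec_sum : ∀ (f : ℕ → Fin N → ℂ) (S : Finset ℕ),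
      A *ᵥ (∑ s ∈ S, f s) = ∑ s ∈ S, A *ᵥ f s := fun f S => map_sum A.mulVecLin f S
  have dot_sum : ∀ (u : Fin N → ℂ) (f : ℕ → Fin N → ℂ) (S : Finset ℕ),
      u ⬝ᵥ (∑ s ∈ S, f s) = ∑ s ∈ S, u ⬝ᵥ f s := by
    intro u f S
    simp only [dotProduct, Finset.sum_apply, Finset.mul_sum]
    rw [Finset.sum_comm]
  -- key shift property: p (j+n) = Aᴴ *ᵥ p j
  have key : ∀ j : ℕ, 1 ≤ j → ∀ v : Fin N → ℂ,
      star (p (j + n)) ⬝ᵥ v = star (p j) ⬝ᵥ (A *ᵥ v) := by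
    intro j hj v
    have hg1 : gIdx (n : ℤ) (((j + n : ℕ) : ℤ)) = gIdx (n : ℤ) (j : ℤ) + 1 := by
      unfold gIdx
      push_cast
      have hnz : (n : ℤ) ≠ 0 := by exact_mod_cast hn.ne'
      rw [Int.fdiv_eq_ediv_of_nonneg _ (by positivity), Int.fdiv_eq_ediv_of_nonneg _ (by positivity),
        show (j : ℤ) + n - 1 = ((j : ℤ) - 1) + 1 * n by ring,
        Int.add_mul_ediv_right _ _ hnz]
    have hg0 : 0 ≤ gIdx (n : ℤ) (j : ℤ) :=
      Int.fdiv_nonneg (by omega) (by positivity : (0:ℤ) ≤ (n:ℤ))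
    have hr1 : rIdx (n : ℤ) (((j + n : ℕ) : ℤ)) = rIdx (n : ℤ) (j : ℤ) := by
      unfold rIdx; rw [hg1]; push_cast; ring
    have hpj : p (j + n) = Aᴴ *ᵥ p j := by
      rw [hp _ (by omega), hp _ hj, hg1, hr1,
        show (gIdx n j + 1).toNat = (gIdx n j).toNat + 1 by omega,
        pow_succ', ← mulVec_mulVec]
    rw [hpj, star_mulVec, conjTranspose_conjTranspose, dotProduct_mulVec]
  intro k
  induction k using Nat.strong_induction_on with
  | _ k IH =>
    intro hk1 hkm
    have hdk : star (p k) ⬝ᵥ (A *ᵥ g (k - 1)) ≠ 0 := by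
      have := hbk (k - 1) (by omega)
      rwa [Nat.sub_add_cancel hk1] at this
    -- first part: r-orthogonality
    have R : ∀ j, 1 ≤ j → j ≤ k → star (p j) ⬝ᵥ r k = 0 := by
      intro j hj1 hjk
      rw [hr k hk1, dotProduct_sub, dotProduct_smul, smul_eq_mul]
      rcases eq_or_lt_of_le hjk with rfl | hlt
      · rw [hα j hj1, div_mul_cancel₀ _ hdk, sub_self]
      · have := IH (k - 1) (by omega) (by omega) (by omega) j hj1 (by omega)
        rw [this.1, this.2, mul_zero, sub_zero]
    refine fun j hj1 hjk => ⟨R j hj1 hjk, ?_⟩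
    -- second part: g-orthogonality
    have hAgk : star (p j) ⬝ᵥ (A *ᵥ g k) =
        star (p j) ⬝ᵥ (A *ᵥ r k) +
          ∑ s ∈ Finset.Ico (k - n) k, β k s * (star (p j) ⬝ᵥ (A *ᵥ g s)) := by
      rw [hg k hk1, mulVec_add, dotProduct_add, mulVec_sum, dot_sum]
      simp only [mulVec_smul, dotProduct_smul, smul_eq_mul]
    rw [hAgk]
    by_cases hcase : j + n ≤ k
    · -- j ≤ k - n : every summand vanishes by IH, and the first term by R at j+n
      have hterm : ∀ s ∈ Finset.Ico (k - n) k,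
          β k s * (star (p j) ⬝ᵥ (A *ᵥ g s)) = 0 := by
        intro s hs
        simp only [Finset.mem_Ico] at hs
        have := (IH s hs.2 (by omega) (by omega) j hj1 (by omega)).2
        rw [this, mul_zero]
      rw [Finset.sum_eq_zero hterm, ← key j hj1, R (j + n) (by omega) hcase, add_zero]
    · -- k - n < j : use the defining property of β
      push_neg at hcase
      set s := j - 1 with hsdef
      have hjs : j = s + 1 := by omega
      have hsmem : s ∈ Finset.Ico (k - n) k := by
        simp only [Finset.mem_Ico]; omega
      have hds : star (p j) ⬝ᵥ (A *ᵥ g s) ≠ 0 := by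
        rw [hjs]; exact hbk s (by omega)
      have hbeta : β k s = -(star (p j) ⬝ᵥ (A *ᵥ r k) +
          ∑ t ∈ Finset.Ico (k - n) s, β k t * (star (p j) ⬝ᵥ (A *ᵥ g t))) /
          (star (p j) ⬝ᵥ (A *ᵥ g s)) := by
        rw [hβ k hk1 s hsmem, ← hjs, mulVec_add, dotProduct_add, mulVec_sum, dot_sum]
        simp only [mulVec_smul, dotProduct_smul, smul_eq_mul]
      -- split the sum at s
      have hsum : ∑ t ∈ Finset.Ico (k - n) k, β k t * (star (p j) ⬝ᵥ (A *ᵥ g t)) =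
          (∑ t ∈ Finset.Ico (k - n) s, β k t * (star (p j) ⬝ᵥ (A *ᵥ g t))) +
            β k s * (star (p j) ⬝ᵥ (A *ᵥ g s)) := by
        simp only [Finset.mem_Ico] at hsmem
        rw [← Finset.sum_Ico_consecutive _ (by omega : k - n ≤ s) (by omega : s ≤ k),
          Finset.sum_eq_sum_Ico_succ_bot (by omega : s < k)]
        have hrest : ∀ t ∈ Finset.Ico (s + 1) k,
            β k t * (star (p j) ⬝ᵥ (A *ᵥ g t)) = 0 := by
          intro t ht
          simp only [Finset.mem_Ico] at ht
          have := (IH t ht.2 (by omega) (by omega) j hj1 (by omega)).2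
          rw [this, mul_zero]
        rw [Finset.sum_eq_zero hrest, add_zero]
      rw [hsum, hbeta, neg_div, neg_mul, div_mul_cancel₀ _ hds]
      ring
end

section
/- Let k ≥ 1 and let v ∈ ℂ^N satisfy p_j^H v = 0 for all 1 ≤ j ≤ k. Let ψ be a polynomial with complex coefficients. Then: (i) if 1 ≤ i ≤ r_n(k) and deg ψ ≤ g_n(k), then q_i^H ψ(A) v = 0; (ii) if r_n(k) < i ≤ n and deg ψ ≤ g_n(k) − 1, then q_i^H ψ(A) v = 0. -/
open Matrix Polynomial

lemma gIdx_eq (n k : ℤ) (hn : 0 < n) : gIdx n k = (k-1) / n :=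
  Int.fdiv_eq_ediv_of_nonneg _ hn.le

lemma gIdx_nonneg (n k : ℤ) (hn : 0 < n) (hk : 1 ≤ k) : 0 ≤ gIdx n k := by
  rw [gIdx_eq n k hn]; exact Int.ediv_nonneg (by omega) hn.le

lemma rIdx_bounds (n k : ℤ) (hn : 0 < n) (hk : 1 ≤ k) :
    1 ≤ rIdx n k ∧ rIdx n k ≤ n := by
  have h1 := Int.emod_nonneg (k-1) hn.ne'
  have h2 := Int.emod_lt_of_pos (k-1) hn
  have h3 := Int.mul_ediv_add_emod (k-1) n
  unfold rIdx
  rw [gIdx_eq n k hn]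
  omega

lemma gr_of (n i : ℤ) (m : ℕ) (hn : 0 < n) (h1 : 1 ≤ i) (h2 : i ≤ n) :
    gIdx n (i + n * m) = m ∧ rIdx n (i + n * m) = i := by
  have hg : gIdx n (i + n * m) = m := by
    rw [gIdx_eq n _ hn]
    have : i + n * m - 1 = (i - 1) + m * n := by ring
    rw [this, Int.add_mul_ediv_right _ _ hn.ne',
      Int.ediv_eq_zero_of_lt (by omega) (by omega)]
    omega
  refine ⟨hg, ?_⟩
  unfold rIdx; rw [hg]; ring

/-- Let `k ≥ 1` and `v ∈ ℂ^N` satisfy `p_jᴴ v = 0` for all `1 ≤ j ≤ k`, where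
`p_j = (Aᴴ)^{g_n(j)} q_{r_n(j)}`.  Let `ψ` be a complex polynomial.  Then:
(i) if `1 ≤ i ≤ r_n(k)` and `deg ψ ≤ g_n(k)`, then `q_iᴴ ψ(A) v = 0`;
(ii) if `r_n(k) < i ≤ n` and `deg ψ ≤ g_n(k) − 1`, then `q_iᴴ ψ(A) v = 0`. -/
theorem stmt_8 {N : ℕ} (A : Matrix (Fin N) (Fin N) ℂ) (n : ℤ) (hn : 0 < n)
    (q : ℤ → (Fin N → ℂ)) (p : ℤ → (Fin N → ℂ))
    (hp : ∀ k : ℤ, 1 ≤ k → p k = (Aᴴ ^ (gIdx n k).toNat) *ᵥ q (rIdx n k))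
    (k : ℤ) (hk : 1 ≤ k) (v : Fin N → ℂ)
    (hv : ∀ j : ℤ, 1 ≤ j → j ≤ k → star (p j) ⬝ᵥ v = 0)
    (ψ : Polynomial ℂ) :
    (∀ i : ℤ, 1 ≤ i → i ≤ rIdx n k → ψ.degree ≤ ((gIdx n k).toNat : WithBot ℕ) →
      star (q i) ⬝ᵥ ((aeval A ψ) *ᵥ v) = 0) ∧
    (∀ i : ℤ, rIdx n k < i → i ≤ n → ψ.degree < ((gIdx n k).toNat : WithBot ℕ) →
      star (q i) ⬝ᵥ ((aeval A ψ) *ᵥ v) = 0) := by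
  set g := gIdx n k with hgdef
  set r := rIdx n k with hrdef
  have hg0 : 0 ≤ g := gIdx_nonneg n k hn hk
  have hr := rIdx_bounds n k hn hk
  have hkrg : k = r + n * g := by rw [hrdef]; unfold rIdx; ring
  -- key: powers
  have key : ∀ (i : ℤ), 1 ≤ i → i ≤ n → ∀ m : ℕ, i + n * m ≤ k →
      star (q i) ⬝ᵥ ((A ^ m) *ᵥ v) = 0 := by
    intro i h1 h2 m hm
    have hj1 : (1:ℤ) ≤ i + n * m := by nlinarith [Int.natCast_nonneg m]
    have hz := hv (i + n * m) hj1 hm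
    rw [hp _ hj1] at hz
    obtain ⟨hjg, hjr⟩ := gr_of n i m hn h1 h2
    rw [hjg, hjr, Int.toNat_natCast, Matrix.star_mulVec,
      Matrix.conjTranspose_pow, Matrix.conjTranspose_conjTranspose,
      ← Matrix.dotProduct_mulVec] at hz
    exact hz
  -- main: polynomial version
  have main : ∀ (i : ℤ), 1 ≤ i → i ≤ n →
      (∀ t : ℕ, ψ.coeff t ≠ 0 → i + n * t ≤ k) →
      star (q i) ⬝ᵥ ((aeval A ψ) *ᵥ v) = 0 := by
    intro i h1 h2 ht
    rw [Polynomial.aeval_eq_sum_range]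
    have hsum : (∑ t ∈ Finset.range (ψ.natDegree + 1), ψ.coeff t • A ^ t) *ᵥ v
        = ∑ t ∈ Finset.range (ψ.natDegree + 1), (ψ.coeff t • A ^ t) *ᵥ v :=
      map_sum (Matrix.mulVec.addMonoidHomLeft v) _ _
    set D : (Fin N → ℂ) →+ ℂ :=
      { toFun := fun w => star (q i) ⬝ᵥ w
        map_zero' := dotProduct_zero _
        map_add' := fun a b => dotProduct_add _ a b } with hD
    rw [hsum, show ∀ w, star (q i) ⬝ᵥ w = D w from fun _ => rfl, map_sum]
    refine Finset.sum_eq_zero fun t _ => ?_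
    rw [show ∀ w, D w = star (q i) ⬝ᵥ w from fun _ => rfl]
    by_cases hc : ψ.coeff t = 0
    · simp [hc]
    · have hz := key i h1 h2 t (ht t hc)
      simp [smul_mulVec, hz]
  constructor
  · intro i hi1 hi2 hdeg
    refine main i hi1 (hi2.trans hr.2) fun t hc => ?_
    have hle : (t : WithBot ℕ) ≤ ((g.toNat : ℕ) : WithBot ℕ) :=
      (Polynomial.le_degree_of_ne_zero hc).trans hdeg
    have htg : (t : ℤ) ≤ g := by
      have : t ≤ g.toNat := by exact_mod_cast hle
      omega
    nlinarith
  · intro i hi1 hi2 hdeg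
    refine main i (hr.1.trans hi1.le) hi2 fun t hc => ?_
    have hle : (t : WithBot ℕ) < ((g.toNat : ℕ) : WithBot ℕ) :=
      lt_of_le_of_lt (Polynomial.le_degree_of_ne_zero hc) hdeg
    have htg : (t : ℤ) ≤ g - 1 := by
      have : t < g.toNat := by exact_mod_cast hle
      omega
    nlinarith
end
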